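/- arXiv:2502.13731 — 7 statements merged into one kernel-verified Lean document; each statement's English description precedes it below -/
import Mathlib

section
/- The counterfactual probability P̃(s̃' | s̃, ã) = (∑_u 1[f(s̃,ã,u)=s̃'] · 1[f(s_t,a_t,u)=s_{t+1}] · θ(u)) / P(s_{t+1}|s_t,a_t) is at most min(1, P(s̃'|s̃,ã) / P(s_{t+1}|s_t,a_t)), whenever θ is consistent with the interventional distribution P. -/
/-!
The exogenous values realising both the observed and the counterfactual transition form a
subset of those realising either one alone, so by consistency their θ-mass is at most both
`P st1 st a_t` and `P sc' sc ac`.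
-/

lemma Finset.sum_filter_le_sum_filter_of_imp {ι : Type*} (s : Finset ι) {p q : ι → Prop}
    [DecidablePred p] [DecidablePred q] {w : ι → ℝ} (hw : ∀ i ∈ s, 0 ≤ w i)
    (hpq : ∀ i ∈ s, p i → q i) :
    ∑ i ∈ s.filter p, w i ≤ ∑ i ∈ s.filter q, w i :=
  Finset.sum_le_sum_of_subset_of_nonneg (Finset.monotone_filter_right s hpq)
    (fun i hi _ => hw i (Finset.mem_of_mem_filter i hi))

lemma div_le_min_one_div {a b c : ℝ} (hac : a ≤ c) (hab : a ≤ b) (hc : 0 ≤ c) :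
    a / c ≤ min 1 (b / c) :=
  le_min (div_le_one_of_le₀ hac hc) (div_le_div_of_nonneg_right hab hc)

theorem cf_prob_upper_bound_general {S A U : Type*} [Fintype U]
    [DecidableEq S]
    (f : S → A → U → S) (θ : U → ℝ)
    (hθ0 : ∀ u, 0 ≤ θ u)
    (P : S → S → A → ℝ)
    (hcons : ∀ s a s', ∑ u ∈ Finset.univ.filter (fun u => f s a u = s'), θ u = P s' s a)
    (st st1 sc sc' : S) (a_t ac : A) :
    (∑ u ∈ Finset.univ.filter (fun u => f sc ac u = sc' ∧ f st a_t u = st1), θ u)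
        / P st1 st a_t
      ≤ min 1 (P sc' sc ac / P st1 st a_t) := by
  have hθ : ∀ u ∈ Finset.univ, 0 ≤ θ u := fun u _ => hθ0 u
  have h_obs : (∑ u ∈ Finset.univ.filter (fun u => f sc ac u = sc' ∧ f st a_t u = st1), θ u)
      ≤ P st1 st a_t :=
    hcons st a_t st1 ▸ Finset.sum_filter_le_sum_filter_of_imp _ hθ (fun _ _ h => h.2)
  have h_cf : (∑ u ∈ Finset.univ.filter (fun u => f sc ac u = sc' ∧ f st a_t u = st1), θ u)
      ≤ P sc' sc ac :=
    hcons sc ac sc' ▸ Finset.sum_filter_le_sum_filter_of_imp _ hθ (fun _ _ h => h.1)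
  have hP : 0 ≤ P st1 st a_t := hcons st a_t st1 ▸ Finset.sum_nonneg (fun u _ => hθ0 u)
  exact div_le_min_one_div h_obs h_cf hP

theorem cf_prob_upper_bound {S A U : Type*} [Fintype S] [Fintype A] [Fintype U]
    [DecidableEq S]
    (f : S → A → U → S) (θ : U → ℝ)
    (hθ0 : ∀ u, 0 ≤ θ u) (hθsum : ∑ u, θ u = 1)
    (P : S → S → A → ℝ)
    (hcons : ∀ s a s', ∑ u ∈ Finset.univ.filter (fun u => f s a u = s'), θ u = P s' s a)
    (st st1 sc sc' : S) (a_t ac : A)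
    (hpos : 0 < P st1 st a_t) :
    (∑ u ∈ Finset.univ.filter (fun u => f sc ac u = sc' ∧ f st a_t u = st1), θ u)
        / P st1 st a_t
      ≤ min 1 (P sc' sc ac / P st1 st a_t) :=
  cf_prob_upper_bound_general f θ hθ0 P hcons st st1 sc sc' a_t ac
end

section
/- The counterfactual probability P̃(s̃' | s̃, ã) = (∑_u 1[f(s̃,ã,u)=s̃'] · 1[f(s_t,a_t,u)=s_{t+1}] · θ(u)) / P(s_{t+1}|s_t,a_t) is at least max(0, (P(s̃'|s̃,ã) − (1 − P(s_{t+1}|s_t,a_t))) / P(s_{t+1}|s_t,a_t)), whenever θ is consistent with the interventional distribution P. -/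
open Finset

theorem Finset.sum_filter_add_sum_filter_le_sum_add_sum_filter_and {ι M : Type*} [Fintype ι]
    [AddCommMonoid M] [PartialOrder M] [IsOrderedAddMonoid M] {w : ι → M} (hw : ∀ i, 0 ≤ w i)
    (p q : ι → Prop) [DecidablePred p] [DecidablePred q] :
    ∑ i ∈ univ.filter p, w i + ∑ i ∈ univ.filter q, w i
      ≤ ∑ i, w i + ∑ i ∈ univ.filter (fun i => p i ∧ q i), w i := by
  classical
  rw [← sum_union_inter, filter_and]
  gcongr
  · exact fun i _ _ => hw i
  · exact subset_univ _

theorem cf_prob_lower_bound_general {S A U : Type*} [Fintype U]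
    [DecidableEq S]
    (f : S → A → U → S) (θ : U → ℝ)
    (hθ0 : ∀ u, 0 ≤ θ u) (hθsum : ∑ u, θ u = 1)
    (P : S → S → A → ℝ)
    (hcons : ∀ s a s', ∑ u ∈ Finset.univ.filter (fun u => f s a u = s'), θ u = P s' s a)
    (st st1 sc sc' : S) (a_t ac : A)
    (hpos : 0 < P st1 st a_t) :
    max 0 ((P sc' sc ac - (1 - P st1 st a_t)) / P st1 st a_t)
      ≤ (∑ u ∈ Finset.univ.filter (fun u => f sc ac u = sc' ∧ f st a_t u = st1), θ u)
          / P st1 st a_t := by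
  have bonferroni := sum_filter_add_sum_filter_le_sum_add_sum_filter_and hθ0
    (fun u => f sc ac u = sc') (fun u => f st a_t u = st1)
  rw [hcons, hcons, hθsum] at bonferroni
  refine max_le (div_nonneg (sum_nonneg fun u _ => hθ0 u) hpos.le) ?_
  exact div_le_div_of_nonneg_right (by linarith) hpos.le

theorem cf_prob_lower_bound {S A U : Type*} [Fintype S] [Fintype A] [Fintype U]
    [DecidableEq S]
    (f : S → A → U → S) (θ : U → ℝ)
    (hθ0 : ∀ u, 0 ≤ θ u) (hθsum : ∑ u, θ u = 1)
    (P : S → S → A → ℝ)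
    (hcons : ∀ s a s', ∑ u ∈ Finset.univ.filter (fun u => f s a u = s'), θ u = P s' s a)
    (st st1 sc sc' : S) (a_t ac : A)
    (hpos : 0 < P st1 st a_t) :
    max 0 ((P sc' sc ac - (1 - P st1 st a_t)) / P st1 st a_t)
      ≤ (∑ u ∈ Finset.univ.filter (fun u => f sc ac u = sc' ∧ f st a_t u = st1), θ u)
          / P st1 st a_t :=
  cf_prob_lower_bound_general f θ hθ0 hθsum P hcons st st1 sc sc' a_t ac hpos
end

section
/- Suppose (s̃,ã) has support disjoint from (s_t,a_t), i.e., no state s' has both P(s'|s̃,ã) > 0 and P(s'|s_t,a_t) > 0. If P(s̃'|s̃,ã) < P(s_{t+1}|s_t,a_t), then there exists a probability vector θ consistent with P such that the counterfactual probability P̃(s̃'|s̃,ã) equals P(s̃'|s̃,ã) / P(s_{t+1}|s_t,a_t), and this value is the maximum over all consistent θ. -/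
/-!
Couple `P(·|s̃,ã)` with `P(·|s_t,a_t)` by a joint law `μ` that sends all the mass of `s̃'` to
`s_{t+1}` (possible since `P(s̃'|s̃,ã) < P(s_{t+1}|s_t,a_t)`) and couples the remaining masses
independently. Since the supports are disjoint, `(s̃,ã) ≠ (s_t,a_t)`, so the noise can be a pair
drawn from `μ`, read by these two mechanisms, together with an independent outcome for every other
state-action pair. Its counterfactual numerator is `μ(s̃',s_{t+1}) = P(s̃'|s̃,ã)`. Conversely, in
any consistent SCM the numerator is the mass of a subevent of `{u | f(s̃,ã,u) = s̃'}`, so it is at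
most `P(s̃'|s̃,ã)`.
-/

open Finset

section PushWeight

variable {U V β γ : Type*} [Fintype U] [Fintype V]

def pushWeight [DecidableEq β] (θ : U → ℝ) (g : U → β) (b : β) : ℝ :=
  ∑ u ∈ univ.filter (fun u => g u = b), θ u

variable [DecidableEq β] [DecidableEq γ]

theorem pushWeight_comp_equiv (e : V ≃ U) (θ : U → ℝ) (g : U → β) (b : β) :
    pushWeight (θ ∘ e) (g ∘ e) b = pushWeight θ g b := by
  simp only [pushWeight, sum_filter]
  exact Fintype.sum_equiv e _ _ fun _ => rfl

theorem pushWeight_prodMk (θ : U → ℝ) (g : U → β) (h : U → γ) (b : β) (c : γ) :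
    pushWeight θ (fun u => (g u, h u)) (b, c) =
      ∑ u ∈ univ.filter (fun u => g u = b ∧ h u = c), θ u := by
  simp only [pushWeight, Prod.mk.injEq]

theorem pushWeight_prodMk_le {θ : U → ℝ} (hθ : ∀ u, 0 ≤ θ u) (g : U → β) (h : U → γ)
    (b : β) (c : γ) : pushWeight θ (fun u => (g u, h u)) (b, c) ≤ pushWeight θ g b := by
  rw [pushWeight_prodMk]
  exact sum_le_sum_of_subset_of_nonneg (monotone_filter_right _ fun _ _ h => h.1)
    fun u _ _ => hθ u

theorem pushWeight_id [DecidableEq U] (θ : U → ℝ) (u : U) : pushWeight θ id u = θ u := by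
  simp [pushWeight, filter_eq']

theorem pushWeight_fst [Fintype β] (μ : β × V → ℝ) (b : β) :
    pushWeight μ Prod.fst b = ∑ v, μ (b, v) := by
  simp only [pushWeight, sum_filter, Fintype.sum_prod_type]
  rw [sum_eq_single b (fun x _ hx => by simp [hx]) (by simp)]
  simp

theorem pushWeight_snd [Fintype β] (μ : U × β → ℝ) (b : β) :
    pushWeight μ Prod.snd b = ∑ u, μ (u, b) := by
  simp [pushWeight, sum_filter, Fintype.sum_prod_type]

theorem pushWeight_mul_comp_fst (μ : U → ℝ) (W : V → ℝ) (g : U → β) (b : β) :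
    pushWeight (fun x : U × V => μ x.1 * W x.2) (g ∘ Prod.fst) b =
      pushWeight μ g b * ∑ v, W v := by
  simp only [pushWeight, sum_filter, Fintype.sum_prod_type, Function.comp_apply, sum_mul_sum,
    ite_mul, zero_mul]

theorem pushWeight_mul_comp_snd (μ : U → ℝ) (W : V → ℝ) (g : V → β) (b : β) :
    pushWeight (fun x : U × V => μ x.1 * W x.2) (g ∘ Prod.snd) b =
      (∑ u, μ u) * pushWeight W g b := by
  simp only [pushWeight, sum_filter, Fintype.sum_prod_type, Function.comp_apply, sum_mul_sum,
    mul_ite, mul_zero]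

end PushWeight

section ProductDistribution

variable {ι S : Type*} [Fintype ι] [Fintype S]

def productWeight (p : ι → S → ℝ) (g : ι → S) : ℝ :=
  ∏ i, p i (g i)

theorem sum_productWeight [DecidableEq ι] {p : ι → S → ℝ} (hp1 : ∀ k, ∑ s, p k s = 1) :
    ∑ g, productWeight p g = 1 := by
  simp only [productWeight, ← Fintype.prod_sum, hp1, prod_const_one]

variable [DecidableEq ι] [DecidableEq S]

theorem pushWeight_productWeight {p : ι → S → ℝ} (hp1 : ∀ k, ∑ s, p k s = 1) (k : ι) :
    pushWeight (productWeight p) (fun g => g k) = p k := by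
  funext s
  have hfiber : univ.filter (fun g : ι → S => g k = s) =
      Fintype.piFinset (Function.update (fun _ => (univ : Finset S)) k {s}) := by
    rw [Fintype.piFinset_update_singleton_eq_filter_piFinset_eq (fun _ => univ) k (mem_univ s),
      Fintype.piFinset_univ]
  simp only [pushWeight, hfiber, productWeight, ← prod_univ_sum]
  rw [prod_eq_single k]
  · simp
  · intro i _ hik
    simp [Function.update_of_ne hik, hp1 i]
  · simp

end ProductDistribution

section Coupling

variable {S : Type*} [Fintype S] [DecidableEq S]

theorem exists_coupling_apply_eq {p q : S → ℝ} (hp0 : ∀ s, 0 ≤ p s) (hq0 : ∀ s, 0 ≤ q s)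
    (hp1 : ∑ s, p s = 1) (hq1 : ∑ s, q s = 1) {x y : S} (hxy : p x < q y) :
    ∃ μ : S × S → ℝ, (∀ z, 0 ≤ μ z) ∧ (∀ v, ∑ w, μ (v, w) = p v) ∧
      (∀ w, ∑ v, μ (v, w) = q w) ∧ μ (x, y) = p x := by
  have hq_le : q y ≤ 1 := hq1 ▸ single_le_sum (fun s _ => hq0 s) (mem_univ y)
  have ht : 0 < 1 - p x := by linarith
  -- `μ = a ⊗ b + r ⊗ c`: the mass `p x` goes to `(x, y)`, and the leftovers `r = p - p x • δ_x`
  -- and `q - p x • δ_y`, both of total mass `1 - p x`, are coupled independently.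
  set a : S → ℝ := Pi.single x (p x)
  set b : S → ℝ := Pi.single y 1
  set r : S → ℝ := p - a
  set c : S → ℝ := fun w => (q w - p x * b w) / (1 - p x)
  have ha0 : 0 ≤ a := Pi.single_nonneg.2 (hp0 x)
  have hb0 : 0 ≤ b := Pi.single_nonneg.2 zero_le_one
  have hr0 : ∀ v, 0 ≤ r v := by
    intro v; by_cases hv : v = x <;> simp [r, a, hv, hp0]
  have hc0 : ∀ w, 0 ≤ c w := by
    intro w
    refine div_nonneg ?_ ht.le
    by_cases hw : w = y <;> simp [b, hw, hq0, hxy.le]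
  have hr1 : ∑ v, r v = 1 - p x := by
    simp [r, a, sum_sub_distrib, hp1]
  have hc1 : ∑ w, c w = 1 := by
    simp [c, b, ← sum_div, sum_sub_distrib, hq1, ← mul_sum, ht.ne']
  refine ⟨fun z => a z.1 * b z.2 + r z.1 * c z.2, fun z => ?_, fun v => ?_, fun w => ?_, ?_⟩
  · exact add_nonneg (mul_nonneg (ha0 _) (hb0 _)) (mul_nonneg (hr0 _) (hc0 _))
  · simp [sum_add_distrib, ← mul_sum, hc1, b, r]
  · simp only [sum_add_distrib, ← sum_mul, hr1, a, c, sum_pi_single', mem_univ, if_true,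
      mul_div_cancel₀ _ ht.ne']
    ring
  · simp [a, b, r]

end Coupling

section CanonicalSCM

variable {ι S U V : Type*} [DecidableEq S] [Fintype U]

structure IsCanonicalSCM (p : ι → S → ℝ) (f : ι → U → S) (θ : U → ℝ) : Prop where
  nonneg : ∀ u, 0 ≤ θ u
  sum_eq_one : ∑ u, θ u = 1
  pushWeight_eq : ∀ i, pushWeight θ (f i) = p i

theorem IsCanonicalSCM.comp_equiv [Fintype V] {p : ι → S → ℝ} {f : ι → U → S} {θ : U → ℝ}
    (h : IsCanonicalSCM p f θ) (e : V ≃ U) : IsCanonicalSCM p (fun i => f i ∘ e) (θ ∘ e) where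
  nonneg u := h.nonneg (e u)
  sum_eq_one := by rw [← h.sum_eq_one]; exact Fintype.sum_equiv e _ _ fun _ => rfl
  pushWeight_eq i := funext fun s => by rw [pushWeight_comp_equiv, h.pushWeight_eq]

end CanonicalSCM

section CouplingMechanism

variable {ι S : Type*} [DecidableEq ι]

def couplingMechanism (i j k : ι) (u : (S × S) × (ι → S)) : S :=
  if k = i then u.1.1 else if k = j then u.1.2 else u.2 k

variable {i j : ι}

theorem couplingMechanism_left : couplingMechanism (S := S) i j i = Prod.fst ∘ Prod.fst :=
  funext fun _ => if_pos rfl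

theorem couplingMechanism_right (hij : i ≠ j) :
    couplingMechanism (S := S) i j j = Prod.snd ∘ Prod.fst :=
  funext fun _ => by simp [couplingMechanism, hij.symm]

theorem couplingMechanism_of_ne {k : ι} (hki : k ≠ i) (hkj : k ≠ j) :
    couplingMechanism (S := S) i j k = (fun g => g k) ∘ Prod.snd :=
  funext fun _ => by simp [couplingMechanism, hki, hkj]

theorem couplingMechanism_prodMk (hij : i ≠ j) :
    (fun u => (couplingMechanism (S := S) i j i u, couplingMechanism i j j u)) = Prod.fst :=
  funext fun _ => by simp [couplingMechanism, hij.symm]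

variable [Fintype ι] [Fintype S] [DecidableEq S]

def couplingNoise (μ : S × S → ℝ) (p : ι → S → ℝ) : (S × S) × (ι → S) → ℝ :=
  fun u => μ u.1 * productWeight p u.2

variable {p : ι → S → ℝ} {μ : S × S → ℝ}

theorem isCanonicalSCM_couplingMechanism (hij : i ≠ j) (hp0 : ∀ k s, 0 ≤ p k s)
    (hp1 : ∀ k, ∑ s, p k s = 1) (hμ0 : ∀ z, 0 ≤ μ z) (hμi : ∀ v, ∑ w, μ (v, w) = p i v)
    (hμj : ∀ w, ∑ v, μ (v, w) = p j w) :
    IsCanonicalSCM p (couplingMechanism i j) (couplingNoise μ p) := by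
  have hμ1 : ∑ z, μ z = 1 := by simp only [Fintype.sum_prod_type, hμi, hp1]
  refine ⟨fun u => mul_nonneg (hμ0 _) (prod_nonneg fun k _ => hp0 k _), ?_, fun k => ?_⟩
  · rw [Fintype.sum_prod_type, ← hμ1]
    simp [couplingNoise, ← mul_sum, sum_productWeight hp1]
  funext s
  unfold couplingNoise
  by_cases hki : k = i
  · subst hki
    rw [couplingMechanism_left, pushWeight_mul_comp_fst, sum_productWeight hp1, mul_one,
      pushWeight_fst, hμi]
  by_cases hkj : k = j
  · subst hkj
    rw [couplingMechanism_right hij, pushWeight_mul_comp_fst, sum_productWeight hp1, mul_one,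
      pushWeight_snd, hμj]
  · rw [couplingMechanism_of_ne hki hkj, pushWeight_mul_comp_snd, hμ1, one_mul,
      pushWeight_productWeight hp1]

theorem pushWeight_couplingMechanism_prodMk (hij : i ≠ j) (hp1 : ∀ k, ∑ s, p k s = 1) :
    pushWeight (couplingNoise μ p)
      (fun u => (couplingMechanism i j i u, couplingMechanism i j j u)) = μ := by
  funext z
  rw [couplingMechanism_prodMk hij]
  unfold couplingNoise
  exact (pushWeight_mul_comp_fst μ (productWeight p) id z).trans
    (by rw [pushWeight_id, sum_productWeight hp1, mul_one])

theorem exists_isCanonicalSCM_of_coupling (hij : i ≠ j) (hp0 : ∀ k s, 0 ≤ p k s)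
    (hp1 : ∀ k, ∑ s, p k s = 1) (hμ0 : ∀ z, 0 ≤ μ z) (hμi : ∀ v, ∑ w, μ (v, w) = p i v)
    (hμj : ∀ w, ∑ v, μ (v, w) = p j w) :
    ∃ (U : Type) (_ : Fintype U) (f : ι → U → S) (θ : U → ℝ),
      IsCanonicalSCM p f θ ∧ pushWeight θ (fun u => (f i u, f j u)) = μ := by
  -- the noise space of the statement lives in `Type`, so move it to `Fin n`
  let e := (Fintype.equivFin ((S × S) × (ι → S))).symm
  refine ⟨_, inferInstance, fun k => couplingMechanism i j k ∘ e, couplingNoise μ p ∘ e,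
    (isCanonicalSCM_couplingMechanism hij hp0 hp1 hμ0 hμi hμj).comp_equiv e, funext fun z => ?_⟩
  exact (pushWeight_comp_equiv e _ _ z).trans
    (congrFun (pushWeight_couplingMechanism_prodMk hij hp1) z)

end CouplingMechanism

theorem cf_prob_disjoint_max_attained {S A : Type*} [Fintype S] [Fintype A] [DecidableEq S]
    (P : S → S → A → ℝ)
    (hP0 : ∀ s' s a, 0 ≤ P s' s a)
    (hPsum : ∀ s a, ∑ s', P s' s a = 1)
    (st st1 sc sc' : S) (a_t ac : A)
    (hpos : 0 < P st1 st a_t)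
    (hdisj : ∀ s' : S, ¬(0 < P s' sc ac ∧ 0 < P s' st a_t))
    (hlt : P sc' sc ac < P st1 st a_t) :
    (∃ (U : Type) (_ : Fintype U) (f : S → A → U → S) (θ : U → ℝ),
      (∀ u, 0 ≤ θ u) ∧ (∑ u, θ u = 1) ∧
      (∀ s a s', ∑ u ∈ Finset.univ.filter (fun u => f s a u = s'), θ u = P s' s a) ∧
      (∑ u ∈ Finset.univ.filter (fun u => f sc ac u = sc' ∧ f st a_t u = st1), θ u)
          / P st1 st a_t = P sc' sc ac / P st1 st a_t)
    ∧ ∀ (U : Type) [Fintype U], ∀ (f : S → A → U → S) (θ : U → ℝ),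
        (∀ u, 0 ≤ θ u) → (∑ u, θ u = 1) →
        (∀ s a s', ∑ u ∈ Finset.univ.filter (fun u => f s a u = s'), θ u = P s' s a) →
        (∑ u ∈ Finset.univ.filter (fun u => f sc ac u = sc' ∧ f st a_t u = st1), θ u)
            / P st1 st a_t ≤ P sc' sc ac / P st1 st a_t := by
  classical
  have hne : (sc, ac) ≠ (st, a_t) := fun h => by
    obtain ⟨rfl, rfl⟩ := Prod.mk.inj h
    exact hdisj st1 ⟨hpos, hpos⟩
  obtain ⟨μ, hμ0, hμl, hμr, hμxy⟩ := exists_coupling_apply_eq (hP0 · sc ac) (hP0 · st a_t)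
    (hPsum sc ac) (hPsum st a_t) hlt
  obtain ⟨U, _, f, θ, hf, hfμ⟩ := exists_isCanonicalSCM_of_coupling
    (p := fun i s' => P s' i.1 i.2) hne (fun i s' => hP0 s' i.1 i.2) (fun i => hPsum i.1 i.2)
    hμ0 hμl hμr
  refine ⟨⟨U, _, fun s a => f (s, a), θ, hf.nonneg, hf.sum_eq_one,
    fun s a => congrFun (hf.pushWeight_eq (s, a)), ?_⟩, ?_⟩
  · rw [← pushWeight_prodMk, hfμ, hμxy]
  · intro U _ f θ hθ _ hf
    gcongr
    rw [← pushWeight_prodMk]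
    exact (pushWeight_prodMk_le hθ _ _ sc' st1).trans_eq (hf sc ac sc')
end

section
/- Suppose (s̃,ã) has support disjoint from (s_t,a_t). If P(s̃'|s̃,ã) ≤ 1 − P(s_{t+1}|s_t,a_t), then there exists a consistent probability vector θ such that the counterfactual probability P̃(s̃'|s̃,ã) equals 0. -/
/-!
Disjoint supports force `(sc, ac) ≠ (st, a_t)`, so the noise behind these two state-action pairs
can be coupled freely. Since `P(sc' | sc, ac) + P(st1 | st, a_t) ≤ 1`, the two next-state laws
admit a coupling that never produces `sc'` and `st1` together; drawing the transitions of all other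
pairs independently gives a canonical SCM whose counterfactual numerator vanishes.
-/

open Finset

section Coupling

variable {X Y : Type*} [DecidableEq X] [DecidableEq Y]

lemma sum_update_zero [Fintype X] (p : X → ℝ) (x₀ : X) :
    ∑ x, Function.update p x₀ 0 x = ∑ x, p x - p x₀ := by
  rw [sum_update_of_mem (mem_univ x₀), ← sum_erase_eq_sub (mem_univ x₀),
    sdiff_singleton_eq_erase, zero_add]

lemma ite_add_update_zero (p : X → ℝ) (x₀ x : X) :
    (if x = x₀ then p x₀ else 0) + Function.update p x₀ 0 x = p x := by
  rcases eq_or_ne x x₀ with rfl | h <;> simp [*]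

/-- With `α = p x₀` and `β = q y₀`, this mixes `δ_{x₀} ⊗ q'`, `p' ⊗ δ_{y₀}` and `p' ⊗ q'`, where
`p', q'` are `p, q` with the atoms at `x₀, y₀` removed; none of the three charges `(x₀, y₀)`. -/
noncomputable def avoidingCoupling (p : X → ℝ) (q : Y → ℝ) (x₀ : X) (y₀ : Y) (x : X) (y : Y) :
    ℝ :=
  (if x = x₀ then p x₀ else 0) * Function.update q y₀ 0 y / (1 - q y₀) +
    Function.update p x₀ 0 x * (if y = y₀ then q y₀ else 0) / (1 - p x₀) +
    (1 - p x₀ - q y₀) * Function.update p x₀ 0 x * Function.update q y₀ 0 y /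
      ((1 - p x₀) * (1 - q y₀))

lemma avoidingCoupling_swap (p : X → ℝ) (q : Y → ℝ) (x₀ : X) (y₀ : Y) (x : X) (y : Y) :
    avoidingCoupling q p y₀ x₀ y x = avoidingCoupling p q x₀ y₀ x y := by
  unfold avoidingCoupling
  ring

lemma avoidingCoupling_self (p : X → ℝ) (q : Y → ℝ) (x₀ : X) (y₀ : Y) :
    avoidingCoupling p q x₀ y₀ x₀ y₀ = 0 := by
  simp [avoidingCoupling]

lemma avoidingCoupling_nonneg {p : X → ℝ} {q : Y → ℝ} (hp : 0 ≤ p) (hq : 0 ≤ q) {x₀ : X} {y₀ : Y}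
    (hp₁ : p x₀ < 1) (hq₁ : q y₀ < 1) (hle : p x₀ + q y₀ ≤ 1) (x : X) (y : Y) :
    0 ≤ avoidingCoupling p q x₀ y₀ x y := by
  have : 0 ≤ Function.update p x₀ 0 x := le_update_iff.2 ⟨le_rfl, fun j _ => hp j⟩ x
  have : 0 ≤ Function.update q y₀ 0 y := le_update_iff.2 ⟨le_rfl, fun j _ => hq j⟩ y
  have : 0 ≤ if x = x₀ then p x₀ else 0 := by split_ifs; exacts [hp x₀, le_rfl]
  have : 0 ≤ if y = y₀ then q y₀ else 0 := by split_ifs; exacts [hq y₀, le_rfl]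
  have : 0 ≤ 1 - p x₀ - q y₀ := by linarith
  have : 0 < 1 - p x₀ := by linarith
  have : 0 < 1 - q y₀ := by linarith
  unfold avoidingCoupling
  positivity

lemma sum_avoidingCoupling_right [Fintype Y] {p : X → ℝ} {q : Y → ℝ} (hq : ∑ y, q y = 1)
    {x₀ : X} {y₀ : Y} (hp₁ : p x₀ ≠ 1) (hq₁ : q y₀ ≠ 1) (x : X) :
    ∑ y, avoidingCoupling p q x₀ y₀ x y = p x := by
  have hα : 1 - p x₀ ≠ 0 := sub_ne_zero.2 hp₁.symm
  have hβ : 1 - q y₀ ≠ 0 := sub_ne_zero.2 hq₁.symm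
  simp only [avoidingCoupling, sum_add_distrib, ← sum_div, ← mul_sum, sum_update_zero, hq,
    sum_ite_eq', mem_univ, if_true]
  rw [← ite_add_update_zero p x₀ x]
  field_simp
  ring

theorem exists_coupling_apply_eq_zero [Fintype X] [Fintype Y] {p : X → ℝ} {q : Y → ℝ}
    (hp_nonneg : 0 ≤ p) (hq_nonneg : 0 ≤ q) (hp_sum : ∑ x, p x = 1) (hq_sum : ∑ y, q y = 1)
    {x₀ : X} {y₀ : Y}
    (hle : p x₀ + q y₀ ≤ 1) :
    ∃ μ : X × Y → ℝ, 0 ≤ μ ∧ (∀ x, ∑ y, μ (x, y) = p x) ∧ (∀ y, ∑ x, μ (x, y) = q y) ∧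
      μ (x₀, y₀) = 0 := by
  rcases eq_or_ne (p x₀ * q y₀) 0 with h | h
  · exact ⟨fun z => p z.1 * q z.2, fun z => mul_nonneg (hp_nonneg _) (hq_nonneg _),
      fun x => by simp only [← mul_sum, hq_sum, mul_one],
      fun y => by simp only [← sum_mul, hp_sum, one_mul], h⟩
  have hα : 0 < p x₀ := (hp_nonneg x₀).lt_of_ne (left_ne_zero_of_mul h).symm
  have hβ : 0 < q y₀ := (hq_nonneg y₀).lt_of_ne (right_ne_zero_of_mul h).symm
  refine ⟨fun z => avoidingCoupling p q x₀ y₀ z.1 z.2,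
    fun z => avoidingCoupling_nonneg hp_nonneg hq_nonneg (by linarith) (by linarith) hle z.1 z.2,
    sum_avoidingCoupling_right hq_sum (by linarith) (by linarith),
    fun y => ?_, avoidingCoupling_self p q x₀ y₀⟩
  simp_rw [← avoidingCoupling_swap p q]
  exact sum_avoidingCoupling_right hp_sum (by linarith) (by linarith) y

end Coupling

section ProductWeights

variable {R : Type*} [CommSemiring R]

lemma sum_filter_fst_mul {X Y : Type*} [Fintype X] [Fintype Y] (p : X → Prop) [DecidablePred p]
    (a : X → R) (b : Y → R) :
    ∑ u ∈ univ.filter (fun u : X × Y => p u.1), a u.1 * b u.2 =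
      (∑ x ∈ univ.filter p, a x) * ∑ y, b y := by
  rw [← univ_product_univ, filter_product_left, sum_product, sum_mul_sum]

lemma sum_filter_snd_mul {X Y : Type*} [Fintype X] [Fintype Y] (p : Y → Prop) [DecidablePred p]
    (a : X → R) (b : Y → R) :
    ∑ u ∈ univ.filter (fun u : X × Y => p u.2), a u.1 * b u.2 =
      (∑ x, a x) * ∑ y ∈ univ.filter p, b y := by
  rw [← univ_product_univ, filter_product_right, sum_product, sum_mul_sum]

variable {ι σ : Type*} [Fintype ι] [DecidableEq ι] [Fintype σ]

lemma sum_prod_apply_eq_one {w : ι → σ → R} (hw : ∀ i, ∑ t, w i t = 1) :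
    ∑ g : ι → σ, ∏ i, w i (g i) = 1 := by
  simp [← Fintype.prod_sum, hw]

lemma sum_filter_apply_eq_prod_apply [DecidableEq σ] {w : ι → σ → R} (hw : ∀ i, ∑ t, w i t = 1)
    (i : ι) (s : σ) :
    ∑ g ∈ univ.filter (fun g : ι → σ => g i = s), ∏ j, w j (g j) = w i s := by
  have hfactor : ∀ g : ι → σ, (if g i = s then ∏ j, w j (g j) else 0) =
      ∏ j, if j = i → g j = s then w j (g j) else 0 := by
    intro g
    simp only [Fintype.prod_ite_zero, forall_eq]
  rw [sum_filter]
  simp_rw [hfactor]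
  rw [← Fintype.prod_sum (fun j t => if j = i → t = s then w j t else 0),
    prod_eq_single i (fun j _ hj => by simp [hj, hw]) (by simp)]
  simp

end ProductWeights

lemma sum_filter_fst_eq {X Y R : Type*} [Fintype X] [Fintype Y] [DecidableEq X] [AddCommMonoid R]
    (μ : X × Y → R) (x : X) :
    ∑ z ∈ univ.filter (fun z : X × Y => z.1 = x), μ z = ∑ y, μ (x, y) := by
  rw [← univ_product_univ, filter_product_left (· = x), filter_eq', if_pos (mem_univ x),
    sum_product, sum_singleton]

lemma sum_filter_snd_eq {X Y R : Type*} [Fintype X] [Fintype Y] [DecidableEq Y] [AddCommMonoid R]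
    (μ : X × Y → R) (y : Y) :
    ∑ z ∈ univ.filter (fun z : X × Y => z.2 = y), μ z = ∑ x, μ (x, y) := by
  rw [← univ_product_univ, filter_product_right (· = y), filter_eq', if_pos (mem_univ y),
    sum_product_right, sum_singleton]

theorem exists_joint_of_coupling {ι σ : Type*} [Fintype ι] [DecidableEq ι] [Fintype σ]
    [DecidableEq σ] {w : ι → σ → ℝ} (hw_nonneg : ∀ i, 0 ≤ w i) (hw_sum : ∀ i, ∑ s, w i s = 1)
    {i₀ i₁ : ι} (hne : i₀ ≠ i₁) {μ : σ × σ → ℝ} (hμ_nonneg : 0 ≤ μ)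
    (hμ_fst : ∀ x, ∑ y, μ (x, y) = w i₀ x) (hμ_snd : ∀ y, ∑ x, μ (x, y) = w i₁ y) :
    ∃ (F : ι → (σ × σ) × (ι → σ) → σ) (θ : (σ × σ) × (ι → σ) → ℝ),
      0 ≤ θ ∧ ∑ u, θ u = 1 ∧
      (∀ i s, ∑ u ∈ univ.filter (fun u => F i u = s), θ u = w i s) ∧
      ∀ x y, ∑ u ∈ univ.filter (fun u => F i₀ u = x ∧ F i₁ u = y), θ u = μ (x, y) := by
  set ν : (ι → σ) → ℝ := fun g => ∏ j, w j (g j)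
  have hν_sum : ∑ g, ν g = 1 := sum_prod_apply_eq_one hw_sum
  have hμ_sum : ∑ z, μ z = 1 := by rw [Fintype.sum_prod_type]; simp [hμ_fst, hw_sum]
  refine ⟨fun i u => if i = i₀ then u.1.1 else if i = i₁ then u.1.2 else u.2 i,
    fun u => μ u.1 * ν u.2,
    fun u => mul_nonneg (hμ_nonneg _) (prod_nonneg fun j _ => hw_nonneg j _),
    ?_, fun i s => ?_, fun x y => ?_⟩ <;> dsimp only
  · rw [Fintype.sum_prod_type' (fun a b => μ a * ν b), ← Fintype.sum_mul_sum, hμ_sum, hν_sum,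
      mul_one]
  · rcases eq_or_ne i i₀ with rfl | h₀
    · simp only [if_true]
      rw [filter_congr_decidable, sum_filter_fst_mul (·.1 = s) μ ν, sum_filter_fst_eq, hμ_fst,
        hν_sum, mul_one]
    rcases eq_or_ne i i₁ with rfl | h₁
    · simp only [h₀, if_true, if_false]
      rw [filter_congr_decidable, sum_filter_fst_mul (·.2 = s) μ ν, sum_filter_snd_eq, hμ_snd,
        hν_sum, mul_one]
    · simp only [h₀, h₁, if_false]
      rw [filter_congr_decidable, sum_filter_snd_mul (· i = s) μ ν, hμ_sum,
        sum_filter_apply_eq_prod_apply hw_sum, one_mul]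
  · simp only [hne.symm, if_true, if_false, ← Prod.mk.injEq, Prod.mk.eta]
    rw [filter_congr_decidable, sum_filter_fst_mul (· = (x, y)) μ ν, filter_eq',
      if_pos (mem_univ _), sum_singleton, hν_sum, mul_one]

theorem cf_prob_disjoint_lb_zero_attained {S A : Type*} [Fintype S] [Fintype A] [DecidableEq S]
    (P : S → S → A → ℝ)
    (hP0 : ∀ s' s a, 0 ≤ P s' s a)
    (hPsum : ∀ s a, ∑ s', P s' s a = 1)
    (st st1 sc sc' : S) (a_t ac : A)
    (hpos : 0 < P st1 st a_t)
    (hdisj : ∀ s' : S, ¬(0 < P s' sc ac ∧ 0 < P s' st a_t))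
    (hle : P sc' sc ac ≤ 1 - P st1 st a_t) :
    ∃ (U : Type) (_ : Fintype U) (f : S → A → U → S) (θ : U → ℝ),
      (∀ u, 0 ≤ θ u) ∧ (∑ u, θ u = 1) ∧
      (∀ s a s', ∑ u ∈ Finset.univ.filter (fun u => f s a u = s'), θ u = P s' s a) ∧
      (∑ u ∈ Finset.univ.filter (fun u => f sc ac u = sc' ∧ f st a_t u = st1), θ u)
          / P st1 st a_t = 0 := by
  classical
  have hne : (sc, ac) ≠ (st, a_t) := by
    intro h
    obtain ⟨rfl, rfl⟩ := Prod.mk.inj h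
    exact hdisj st1 ⟨hpos, hpos⟩
  obtain ⟨μ, hμ_nonneg, hμ_fst, hμ_snd, hμ⟩ := exists_coupling_apply_eq_zero (x₀ := sc') (y₀ := st1)
    (fun s' => hP0 s' sc ac) (fun s' => hP0 s' st a_t) (hPsum sc ac) (hPsum st a_t)
    (by linarith)
  obtain ⟨F, θ, hθ_nonneg, hθ_sum, hθF, hθpair⟩ :=
    exists_joint_of_coupling (w := fun i s' => P s' i.1 i.2) (fun i s' => hP0 s' i.1 i.2)
      (fun i => hPsum i.1 i.2) hne hμ_nonneg hμ_fst hμ_snd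
  let e := (Fintype.equivFin ((S × S) × (S × A → S))).symm
  refine ⟨Fin _, inferInstance, fun s a k => F (s, a) (e k), θ ∘ e, fun k => hθ_nonneg _,
    (e.sum_comp θ).trans hθ_sum, fun s a s' => ?_, ?_⟩
  · exact (sum_equiv e (by simp) (by simp)).trans (hθF (s, a) s')
  · rw [(sum_equiv e (by simp) (by simp)).trans (hθpair sc' st1), hμ, zero_div]
end

section
/- Suppose (s̃,ã) has support disjoint from (s_t,a_t). If P(s̃'|s̃,ã) > 1 − P(s_{t+1}|s_t,a_t), then every consistent probability vector θ yields counterfactual probability P̃(s̃'|s̃,ã) ≥ (P(s̃'|s̃,ã) − (1 − P(s_{t+1}|s_t,a_t))) / P(s_{t+1}|s_t,a_t), and this bound is attained by some consistent θ. -/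
open Finset

lemma sum_pi_filter_eq {ι κ : Type*} [Fintype ι] [Fintype κ] [DecidableEq ι] [DecidableEq κ]
    (w : ι → κ → ℝ) (hw : ∀ i, ∑ k, w i k = 1) (i₀ : ι) (k₀ : κ) :
    ∑ g ∈ Finset.univ.filter (fun g : ι → κ => g i₀ = k₀), ∏ i, w i (g i) = w i₀ k₀ := by
  classical
  have h1 : ∀ g : ι → κ, (if g i₀ = k₀ then ∏ i, w i (g i) else 0)
      = ∏ i, (fun i k => if i = i₀ then (if k = k₀ then w i k else 0) else w i k) i (g i) := by
    intro g
    by_cases h : g i₀ = k₀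
    · rw [if_pos h]
      refine Finset.prod_congr rfl fun i _ => ?_
      by_cases hi : i = i₀
      · subst hi; simp [h]
      · simp [hi]
    · rw [if_neg h]
      symm
      apply Finset.prod_eq_zero (Finset.mem_univ i₀)
      simp [h]
  set W : ι → κ → ℝ := fun i k => if i = i₀ then (if k = k₀ then w i k else 0) else w i k with hW
  have h2 : ∑ k, W i₀ k = w i₀ k₀ := by simp [hW]
  have h3 : ∏ i ∈ Finset.univ.erase i₀, (∑ k, W i k) = 1 := by
    refine Finset.prod_eq_one fun i hi => ?_
    have hne : i ≠ i₀ := (Finset.mem_erase.mp hi).1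
    simp [hW, hne, hw i]
  calc ∑ g ∈ Finset.univ.filter (fun g : ι → κ => g i₀ = k₀), ∏ i, w i (g i)
      = ∑ g : ι → κ, (if g i₀ = k₀ then ∏ i, w i (g i) else 0) := Finset.sum_filter _ _
    _ = ∑ g : ι → κ, ∏ i, W i (g i) := Finset.sum_congr rfl fun g _ => h1 g
    _ = ∏ i, ∑ k, W i k := (Fintype.prod_sum W).symm
    _ = (∑ k, W i₀ k) * ∏ i ∈ Finset.univ.erase i₀, (∑ k, W i k) :=
        (Finset.mul_prod_erase _ _ (Finset.mem_univ i₀)).symm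
    _ = w i₀ k₀ := by rw [h2, h3, mul_one]

lemma sum_filter_prod {α β : Type*} [Fintype α] [Fintype β] (c : α → Prop) (d : β → Prop)
    [DecidablePred c] [DecidablePred d] (μ : α → ℝ) (ν : β → ℝ) :
    ∑ u ∈ Finset.univ.filter (fun u : α × β => c u.1 ∧ d u.2), μ u.1 * ν u.2
      = (∑ a ∈ Finset.univ.filter c, μ a) * ∑ b ∈ Finset.univ.filter d, ν b := by
  have h : Finset.univ.filter (fun u : α × β => c u.1 ∧ d u.2)
      = (Finset.univ.filter c) ×ˢ (Finset.univ.filter d) := by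
    ext u; simp [Finset.mem_product]
  rw [h, Finset.sum_mul_sum, Finset.sum_product]

theorem cf_prob_disjoint_lb_attained {S A : Type*} [Fintype S] [Fintype A] [DecidableEq S]
    (P : S → S → A → ℝ)
    (hP0 : ∀ s' s a, 0 ≤ P s' s a)
    (hPsum : ∀ s a, ∑ s', P s' s a = 1)
    (st st1 sc sc' : S) (a_t ac : A)
    (hpos : 0 < P st1 st a_t)
    (hdisj : ∀ s' : S, ¬(0 < P s' sc ac ∧ 0 < P s' st a_t))
    (hgt : 1 - P st1 st a_t < P sc' sc ac) :
    (∀ (U : Type) [Fintype U], ∀ (f : S → A → U → S) (θ : U → ℝ),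
        (∀ u, 0 ≤ θ u) → (∑ u, θ u = 1) →
        (∀ s a s', ∑ u ∈ Finset.univ.filter (fun u => f s a u = s'), θ u = P s' s a) →
        (P sc' sc ac - (1 - P st1 st a_t)) / P st1 st a_t ≤
          (∑ u ∈ Finset.univ.filter (fun u => f sc ac u = sc' ∧ f st a_t u = st1), θ u)
            / P st1 st a_t)
    ∧ ∃ (U : Type) (_ : Fintype U) (f : S → A → U → S) (θ : U → ℝ),
      (∀ u, 0 ≤ θ u) ∧ (∑ u, θ u = 1) ∧
      (∀ s a s', ∑ u ∈ Finset.univ.filter (fun u => f s a u = s'), θ u = P s' s a) ∧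
      (∑ u ∈ Finset.univ.filter (fun u => f sc ac u = sc' ∧ f st a_t u = st1), θ u)
          / P st1 st a_t = (P sc' sc ac - (1 - P st1 st a_t)) / P st1 st a_t := by
  classical
  constructor
  · -- lower bound
    intro U _ f θ hθ0 hθsum hcons
    have hC := hcons sc ac sc'
    have hT := hcons st a_t st1
    rw [div_le_div_iff_of_pos_right hpos]
    have hinter : Finset.univ.filter (fun u => f sc ac u = sc' ∧ f st a_t u = st1)
        = (Finset.univ.filter (fun u => f sc ac u = sc'))
          ∩ (Finset.univ.filter (fun u => f st a_t u = st1)) := by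
      ext u; simp
    rw [hinter]
    have hunion : ∑ u ∈ (Finset.univ.filter (fun u => f sc ac u = sc'))
        ∪ (Finset.univ.filter (fun u => f st a_t u = st1)), θ u ≤ 1 := by
      rw [← hθsum]
      exact Finset.sum_le_sum_of_subset_of_nonneg (Finset.subset_univ _) fun u _ _ => hθ0 u
    have key := Finset.sum_union_inter (s₁ := Finset.univ.filter (fun u => f sc ac u = sc'))
      (s₂ := Finset.univ.filter (fun u => f st a_t u = st1)) (f := θ)
    rw [hC, hT] at key
    linarith
  · -- attainment
    set p := P sc' sc ac with hp
    set q := P st1 st a_t with hq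
    set μ : S → S → ℝ := fun x y =>
      if x = sc' then (if y = st1 then p + q - 1 else P y st a_t)
      else (if y = st1 then P x sc ac else 0) with hμ
    have hμ0 : ∀ x y, 0 ≤ μ x y := by
      intro x y
      simp only [hμ]
      split
      · split
        · linarith
        · exact hP0 _ _ _
      · split
        · exact hP0 _ _ _
        · exact le_refl 0
    have hrow : ∀ x, ∑ y, μ x y = P x sc ac := by
      intro x
      by_cases hx : x = sc'
      · have he : ∀ y, μ x y = P y st a_t + (if y = st1 then p - 1 else 0) := by
          intro y
          simp only [hμ]
          rw [if_pos hx]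
          by_cases hy : y = st1
          · rw [if_pos hy, if_pos hy, hy, ← hq]; ring
          · simp [hy]
        simp_rw [he]
        rw [Finset.sum_add_distrib, hPsum, hx]
        simp [hp]
      · have he : ∀ y, μ x y = if y = st1 then P x sc ac else 0 := by
          intro y; simp only [hμ, if_neg hx]
        simp_rw [he]
        simp
    have hcol : ∀ y, ∑ x, μ x y = P y st a_t := by
      intro y
      by_cases hy : y = st1
      · have he : ∀ x, μ x y = P x sc ac + (if x = sc' then q - 1 else 0) := by
          intro x
          simp only [hμ]
          by_cases hx : x = sc'
          · rw [if_pos hx, if_pos hy, if_pos hx, hx, ← hp]; ring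
          · simp [hx, hy]
        simp_rw [he]
        rw [Finset.sum_add_distrib, hPsum, hy]
        simp [hq]
      · have he : ∀ x, μ x y = if x = sc' then P y st a_t else 0 := by
          intro x
          simp only [hμ]
          by_cases hx : x = sc' <;> simp [hx, hy]
        simp_rw [he]
        simp
    have hμsum : ∑ x : S × S, μ x.1 x.2 = 1 := by
      rw [Fintype.sum_prod_type]
      simp_rw [hrow]
      exact hPsum sc ac
    -- the pi part
    set w : S × A → S → ℝ := fun i k => P k i.1 i.2 with hw
    have hw1 : ∀ i : S × A, ∑ k, w i k = 1 := fun i => hPsum i.1 i.2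
    set ν : (S × A → S) → ℝ := fun g => ∏ i, w i (g i) with hν
    have hν0 : ∀ g, 0 ≤ ν g := fun g => Finset.prod_nonneg fun i _ => hP0 _ _ _
    have hνsum : ∑ g, ν g = 1 := by
      rw [hν, ← Fintype.prod_sum]
      simp_rw [hw1]
      simp
    have hνcons : ∀ (i₀ : S × A) (k₀ : S),
        ∑ g ∈ Finset.univ.filter (fun g : S × A → S => g i₀ = k₀), ν g = w i₀ k₀ :=
      fun i₀ k₀ => sum_pi_filter_eq w hw1 i₀ k₀
    -- assemble on U' = (S × S) × (S × A → S)
    set U' := (S × S) × (S × A → S) with hU'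
    set F : S → A → U' → S := fun s a u =>
      if s = sc ∧ a = ac then u.1.1 else if s = st ∧ a = a_t then u.1.2 else u.2 (s, a) with hF
    set Θ : U' → ℝ := fun u => μ u.1.1 u.1.2 * ν u.2 with hΘ
    have hne : ¬(st = sc ∧ a_t = ac) := by
      rintro ⟨h1, h2⟩
      exact hdisj st1 ⟨by rw [← h1, ← h2]; exact hpos, hpos⟩
    have hΘ0 : ∀ u, 0 ≤ Θ u := fun u => mul_nonneg (hμ0 _ _) (hν0 _)
    have hΘsum : ∑ u, Θ u = 1 := by
      rw [hΘ, Fintype.sum_prod_type]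
      simp_rw [← Finset.mul_sum]
      have : ∀ x : S × S, μ x.1 x.2 * ∑ g, ν g = μ x.1 x.2 := by
        intro x; rw [hνsum, mul_one]
      calc ∑ x : S × S, μ x.1 x.2 * ∑ g, ν g = ∑ x : S × S, μ x.1 x.2 :=
            Finset.sum_congr rfl fun x _ => this x
        _ = 1 := hμsum
    have hΘcons : ∀ s a s', ∑ u ∈ Finset.univ.filter (fun u => F s a u = s'), Θ u = P s' s a := by
      intro s a s'
      by_cases h1 : s = sc ∧ a = ac
      · have hfil : Finset.univ.filter (fun u : U' => F s a u = s')
            = Finset.univ.filter (fun u : U' => (fun x : S × S => x.1 = s') u.1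
                ∧ (fun _ : S × A → S => True) u.2) := by
          ext u; simp [hF, h1]
        rw [hfil, hΘ]
        rw [sum_filter_prod (fun x : S × S => x.1 = s') (fun _ => True)
          (fun x => μ x.1 x.2) ν]
        rw [Finset.filter_true, hνsum, mul_one]
        rw [Finset.sum_filter, Fintype.sum_prod_type]
        have hin : ∀ x : S, ∑ y : S, (if x = s' then μ x y else 0)
            = if x = s' then ∑ y, μ x y else 0 := by
          intro x; split <;> simp
        simp_rw [hin, hrow]
        simp [h1.1, h1.2]
      · by_cases h2 : s = st ∧ a = a_t
        · have hfil : Finset.univ.filter (fun u : U' => F s a u = s')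
              = Finset.univ.filter (fun u : U' => (fun x : S × S => x.2 = s') u.1
                  ∧ (fun _ : S × A → S => True) u.2) := by
            ext u; simp [hF, h1, h2, hne]
          rw [hfil, hΘ]
          rw [sum_filter_prod (fun x : S × S => x.2 = s') (fun _ => True)
            (fun x => μ x.1 x.2) ν]
          rw [Finset.filter_true, hνsum, mul_one]
          rw [Finset.sum_filter, Fintype.sum_prod_type]
          have hin : ∀ x : S, ∑ y : S, (if y = s' then μ x y else 0) = μ x s' := by
            intro x; simp
          simp_rw [hin, hcol]
          simp [h2.1, h2.2]
        · have hfil : Finset.univ.filter (fun u : U' => F s a u = s')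
              = Finset.univ.filter (fun u : U' => (fun _ : S × S => True) u.1
                  ∧ (fun g : S × A → S => g (s, a) = s') u.2) := by
            ext u; simp [hF, h1, h2, hne]
          rw [hfil, hΘ]
          rw [sum_filter_prod (fun _ : S × S => True) (fun g : S × A → S => g (s, a) = s')
            (fun x => μ x.1 x.2) ν]
          rw [Finset.filter_true, hμsum, one_mul, hνcons]
    have hΘval : ∑ u ∈ Finset.univ.filter (fun u => F sc ac u = sc' ∧ F st a_t u = st1), Θ u
        = p + q - 1 := by
      have hfil : Finset.univ.filter (fun u : U' => F sc ac u = sc' ∧ F st a_t u = st1)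
          = Finset.univ.filter (fun u : U' =>
              (fun x : S × S => x.1 = sc' ∧ x.2 = st1) u.1
                ∧ (fun _ : S × A → S => True) u.2) := by
        ext u; simp [hF, hne]
      rw [hfil, hΘ]
      rw [sum_filter_prod (fun x : S × S => x.1 = sc' ∧ x.2 = st1) (fun _ => True)
        (fun x => μ x.1 x.2) ν]
      rw [Finset.filter_true, hνsum, mul_one]
      have hsingle : Finset.univ.filter (fun x : S × S => x.1 = sc' ∧ x.2 = st1)
          = {(sc', st1)} := by
        ext x; simp [Prod.ext_iff]
      rw [hsingle, Finset.sum_singleton]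
      simp [hμ]
    -- transport to Fin n
    obtain ⟨n, ⟨e⟩⟩ : ∃ n : ℕ, Nonempty (U' ≃ Fin n) := ⟨Fintype.card U', ⟨Fintype.equivFin U'⟩⟩
    refine ⟨Fin n, inferInstance, fun s a u => F s a (e.symm u), fun u => Θ (e.symm u),
      fun u => hΘ0 _, ?_, ?_, ?_⟩
    · rw [Fintype.sum_equiv e.symm _ Θ fun u => rfl]; exact hΘsum
    · intro s a s'
      rw [Finset.sum_filter, ← hΘcons s a s', Finset.sum_filter]
      exact Fintype.sum_equiv e.symm _ _ fun u => rfl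
    · have : ∑ u ∈ Finset.univ.filter
          (fun u : Fin n => F sc ac (e.symm u) = sc' ∧ F st a_t (e.symm u) = st1),
          Θ (e.symm u) = p + q - 1 := by
        rw [Finset.sum_filter, ← hΘval, Finset.sum_filter]
        exact Fintype.sum_equiv e.symm _ _ fun u => rfl
      rw [this]
      congr 1
      ring
end

section
/- For s̃' = s_{t+1} (the observed outcome), the counterfactual probability P̃(s_{t+1}|s̃,ã) over any consistent θ is at most min(P(s_{t+1}|s_t,a_t), P(s_{t+1}|s̃,ã)) / P(s_{t+1}|s_t,a_t). -/
theorem Finset.sum_filter_and_le_min {ι M : Type*} [AddCommMonoid M] [LinearOrder M]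
    [IsOrderedAddMonoid M] (s : Finset ι) (p q : ι → Prop) [DecidablePred p] [DecidablePred q]
    (w : ι → M) (hw : ∀ i ∈ s, 0 ≤ w i) :
    ∑ i ∈ s.filter (fun i => p i ∧ q i), w i
      ≤ min (∑ i ∈ s.filter p, w i) (∑ i ∈ s.filter q, w i) := by
  have hle {r : ι → Prop} [DecidablePred r] (hr : ∀ i, p i ∧ q i → r i) :
      ∑ i ∈ s.filter (fun i => p i ∧ q i), w i ≤ ∑ i ∈ s.filter r, w i :=
    Finset.sum_le_sum_of_subset_of_nonneg (Finset.monotone_filter_right s fun i _ => hr i)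
      fun i hi _ => hw i (Finset.mem_of_mem_filter i hi)
  exact le_min (hle fun _ h => h.1) (hle fun _ h => h.2)

theorem cf_prob_observed_outcome_ub_general {S A U : Type*} [Fintype U]
    [DecidableEq S]
    (f : S → A → U → S) (θ : U → ℝ)
    (hθ0 : ∀ u, 0 ≤ θ u)
    (P : S → S → A → ℝ)
    (hcons : ∀ s a s', ∑ u ∈ Finset.univ.filter (fun u => f s a u = s'), θ u = P s' s a)
    (st st1 sc : S) (a_t ac : A)
    (hpos : 0 < P st1 st a_t) :
    (∑ u ∈ Finset.univ.filter (fun u => f sc ac u = st1 ∧ f st a_t u = st1), θ u)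
        / P st1 st a_t
      ≤ min (P st1 st a_t) (P st1 sc ac) / P st1 st a_t := by
  have hjoint := Finset.univ.sum_filter_and_le_min (fun u => f sc ac u = st1)
    (fun u => f st a_t u = st1) θ fun u _ => hθ0 u
  rw [hcons, hcons, min_comm] at hjoint
  exact div_le_div_of_nonneg_right hjoint hpos.le

theorem cf_prob_observed_outcome_ub {S A U : Type*} [Fintype S] [Fintype A] [Fintype U]
    [DecidableEq S]
    (f : S → A → U → S) (θ : U → ℝ)
    (hθ0 : ∀ u, 0 ≤ θ u) (hθsum : ∑ u, θ u = 1)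
    (P : S → S → A → ℝ)
    (hcons : ∀ s a s', ∑ u ∈ Finset.univ.filter (fun u => f s a u = s'), θ u = P s' s a)
    (st st1 sc : S) (a_t ac : A)
    (hpos : 0 < P st1 st a_t) :
    (∑ u ∈ Finset.univ.filter (fun u => f sc ac u = st1 ∧ f st a_t u = st1), θ u)
        / P st1 st a_t
      ≤ min (P st1 st a_t) (P st1 sc ac) / P st1 st a_t :=
  cf_prob_observed_outcome_ub_general f θ hθ0 P hcons st st1 sc a_t ac hpos
end

section
/- If θ is consistent with P and satisfies counterfactual monotonicity condition 1 (P̃(s_{t+1}|s̃,ã) ≥ P(s_{t+1}|s̃,ã)), then for any s̃' ≠ s_{t+1}, P̃(s̃'|s̃,ã) ≤ min(P(s̃'|s̃,ã)/P(s_{t+1}|s_t,a_t), 1 − P(s_{t+1}|s̃,ã)). -/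
/-!
On the event `f st a_t = st1` that conditions the counterfactual, the noise values sending
`(sc, ac)` to `sc'` and those sending it to `st1` are disjoint when `sc' ≠ st1`, so their masses
add up to at most `P st1 st a_t`. The second mass, divided by `P st1 st a_t`, dominates
`P st1 sc ac` by monotonicity, which leaves at most `1 - P st1 sc ac` for the first; dropping the
conditioning event gives the bound `P sc' sc ac / P st1 st a_t`.
-/

namespace Finset

variable {ι M : Type*} [AddCommMonoid M] [Preorder M] [AddLeftMono M]
  {s : Finset ι} {w : ι → M} {p q r : ι → Prop} [DecidablePred p] [DecidablePred q]
  [DecidablePred r]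

theorem sum_filter_and_le_sum_filter_left (hw : ∀ i ∈ s, 0 ≤ w i) :
    ∑ i ∈ s.filter (fun i => p i ∧ q i), w i ≤ ∑ i ∈ s.filter p, w i :=
  sum_le_sum_of_subset_of_nonneg (monotone_filter_right s fun _ _ => And.left)
    fun i hi _ => hw i (filter_subset p s hi)

theorem sum_filter_and_add_sum_filter_and_le_sum_filter_right (hw : ∀ i ∈ s, 0 ≤ w i)
    (hpq : ∀ i ∈ s, p i → ¬q i) :
    ∑ i ∈ s.filter (fun i => p i ∧ r i), w i + ∑ i ∈ s.filter (fun i => q i ∧ r i), w i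
      ≤ ∑ i ∈ s.filter r, w i := by
  classical
  have hdisj : Disjoint (s.filter fun i => p i ∧ r i) (s.filter fun i => q i ∧ r i) :=
    disjoint_filter.2 fun i hi hpr hqr => hpq i hi hpr.1 hqr.1
  have hsub {t : ι → Prop} [DecidablePred t] : s.filter (fun i => t i ∧ r i) ⊆ s.filter r :=
    monotone_filter_right s fun _ _ => And.right
  rw [← sum_union hdisj]
  exact sum_le_sum_of_subset_of_nonneg (union_subset hsub hsub)
    fun i hi _ => hw i (filter_subset r s hi)

end Finset

theorem cf_prob_monotonicity_ub_general {S A U : Type*} [Fintype S] [Fintype U]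
    [DecidableEq S]
    (f : S → A → U → S) (θ : U → ℝ)
    (hθ0 : ∀ u, 0 ≤ θ u)
    (P : S → S → A → ℝ)
    (hcons : ∀ s a s', ∑ u ∈ Finset.univ.filter (fun u => f s a u = s'), θ u = P s' s a)
    (st st1 sc sc' : S) (a_t ac : A)
    (hpos : 0 < P st1 st a_t)
    (hmon1 : P st1 sc ac ≤
      (∑ u ∈ Finset.univ.filter (fun u => f sc ac u = st1 ∧ f st a_t u = st1), θ u)
        / P st1 st a_t)
    (hne : sc' ≠ st1) :
    (∑ u ∈ Finset.univ.filter (fun u => f sc ac u = sc' ∧ f st a_t u = st1), θ u)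
        / P st1 st a_t
      ≤ min (P sc' sc ac / P st1 st a_t) (1 - P st1 sc ac) := by
  set N := ∑ u ∈ Finset.univ.filter (fun u => f sc ac u = sc' ∧ f st a_t u = st1), θ u
  set M := ∑ u ∈ Finset.univ.filter (fun u => f sc ac u = st1 ∧ f st a_t u = st1), θ u
  have hN : N ≤ P sc' sc ac :=
    hcons sc ac sc' ▸ Finset.sum_filter_and_le_sum_filter_left fun u _ => hθ0 u
  have hNM : N + M ≤ P st1 st a_t :=
    hcons st a_t st1 ▸ Finset.sum_filter_and_add_sum_filter_and_le_sum_filter_right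
      (fun u _ => hθ0 u) fun u _ hsc' hst1 => hne (hsc'.symm.trans hst1)
  refine le_min (div_le_div_of_nonneg_right hN hpos.le) ?_
  calc N / P st1 st a_t ≤ 1 - M / P st1 st a_t := by
        rw [le_sub_iff_add_le, ← add_div, div_le_one hpos]
        exact hNM
    _ ≤ 1 - P st1 sc ac := sub_le_sub_left hmon1 1

theorem cf_prob_monotonicity_ub {S A U : Type*} [Fintype S] [Fintype A] [Fintype U]
    [DecidableEq S]
    (f : S → A → U → S) (θ : U → ℝ)
    (hθ0 : ∀ u, 0 ≤ θ u) (hθsum : ∑ u, θ u = 1)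
    (P : S → S → A → ℝ)
    (hcons : ∀ s a s', ∑ u ∈ Finset.univ.filter (fun u => f s a u = s'), θ u = P s' s a)
    (st st1 sc sc' : S) (a_t ac : A)
    (hpos : 0 < P st1 st a_t)
    (hmon1 : P st1 sc ac ≤
      (∑ u ∈ Finset.univ.filter (fun u => f sc ac u = st1 ∧ f st a_t u = st1), θ u)
        / P st1 st a_t)
    (hne : sc' ≠ st1) :
    (∑ u ∈ Finset.univ.filter (fun u => f sc ac u = sc' ∧ f st a_t u = st1), θ u)
        / P st1 st a_t
      ≤ min (P sc' sc ac / P st1 st a_t) (1 - P st1 sc ac) :=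
  cf_prob_monotonicity_ub_general f θ hθ0 P hcons st st1 sc sc' a_t ac hpos hmon1 hne
end
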